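/- Fix integers c ≥ 2 and h ≥ 1 and a nonzero real number α, and let T_{c,h,α} be the perfect c-ary tree of height h with every edge weight equal to α. Then g(T_{c,h,α}; n) ≈ n^(c^h): there is a constant C > 0 such that every set of n points in ℝ² contains at most C · n^(c^h) dot product T_{c,h,α}-configurations, and there exist a constant c' > 0 and N such that for every n > N some set of n points in ℝ² contains at least c' · n^(c^h) dot product T_{c,h,α}-configurations. -/

import Mathlib

/-!
If `α ≠ 0`, two distinct points `p ≠ q` of the plane have at most one common point `x` with
`p · x = q · x = α`. In a configuration every non-leaf vertex has two distinct children, so it is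
determined by them; hence a configuration is determined by its `c ^ h` leaves, and there are at
most `n ^ (c ^ h)` of them.

Conversely, fix a realization of the tree without its leaves. On the line `{x | p · x = α}` of
each of the `c ^ (h - 1)` parents `p` of leaves choose `M` points, avoiding everything chosen
before and the other such lines. Any injective placement of the `c` children of each parent
among its `M` points is a configuration, so about `c ^ (h - 1) * M` points carry at least
`(M + 1 - c) ^ (c ^ h)` configurations.
-/

open scoped InnerProductSpace

noncomputable section

/-- Points in the plane. -/
abbrev Pt2 : Type := EuclideanSpace ℝ (Fin 2)

/-- The vertex set of the perfect `c`-ary rooted tree `T_{c,h}` of height `h`: a vertex is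
a list of child-selectors of length at most `h` (the root is the empty list, and the
leaves are the lists of length exactly `h`). -/
def TreeVert (c h : ℕ) : Type := {l : List (Fin c) // l.length ≤ h}

/-- Adjacency in the perfect `c`-ary tree `T_{c,h}`: a vertex is adjacent precisely to its
parent and to its children. -/
def treeAdj (c h : ℕ) (u v : TreeVert c h) : Prop :=
  (∃ i : Fin c, u.1 = i :: v.1) ∨ (∃ i : Fin c, v.1 = i :: u.1)

/-- The set of dot product `T_{c,h,α}`-configurations in a point set `E`, where every
edge of `T_{c,h}` carries the same weight `α`: injective maps `φ` from the vertices of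
`T_{c,h}` into `E` such that the dot product of the images of any two adjacent vertices
equals `α`. -/
def dpTreeConfigs (c h : ℕ) (α : ℝ) (E : Finset Pt2) : Set (TreeVert c h → Pt2) :=
  {φ | (∀ v, φ v ∈ E) ∧ Function.Injective φ ∧
    ∀ u v, treeAdj c h u v → ⟪φ u, φ v⟫_ℝ = α}

open Module

section Geometry

variable {V : Type*} [NormedAddCommGroup V] [InnerProductSpace ℝ V]

def dotLine (p : V) (α : ℝ) : Set V := {x | ⟪p, x⟫_ℝ = α}

theorem ne_zero_of_mem_dotLine {p x : V} {α : ℝ} (hα : α ≠ 0) (hx : x ∈ dotLine p α) :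
    x ≠ 0 := by
  rintro rfl
  exact hα (by simpa [dotLine] using hx.symm)

theorem dotLine_infinite [FiniteDimensional ℝ V] (hV : 2 ≤ finrank ℝ V) {p : V} (hp : p ≠ 0)
    (α : ℝ) : (dotLine p α).Infinite := by
  obtain ⟨v, hv, hv0⟩ : ∃ v ∈ (ℝ ∙ p)ᗮ, v ≠ 0 := by
    apply Submodule.exists_mem_ne_zero_of_ne_bot
    intro hbot
    have := (ℝ ∙ p).finrank_add_finrank_orthogonal
    rw [hbot, finrank_bot, finrank_span_singleton hp] at this
    omega
  rw [Submodule.mem_orthogonal_singleton_iff_inner_right] at hv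
  refine Set.infinite_of_injective_forall_mem
    (f := fun t : ℝ => (α / ‖p‖ ^ 2) • p + t • v)
    ((add_right_injective _).comp (smul_left_injective ℝ hv0)) fun t => ?_
  simp [dotLine, inner_add_right, inner_smul_right, hv, hp]

theorem dotLine_inter_subsingleton [Fact (finrank ℝ V = 2)] {α : ℝ} (hα : α ≠ 0) {p q : V}
    (hpq : p ≠ q) : (dotLine p α ∩ dotLine q α).Subsingleton := by
  rintro x ⟨hpx : ⟪p, x⟫_ℝ = α, hqx : ⟪q, x⟫_ℝ = α⟩
    y ⟨hpy : ⟪p, y⟫_ℝ = α, hqy : ⟪q, y⟫_ℝ = α⟩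
  by_contra hxy
  have hp : p ≠ 0 := by rintro rfl; exact hα (by simpa [dotLine] using hpx.symm)
  have hd (r : V) (hrx : ⟪r, x⟫_ℝ = α) (hry : ⟪r, y⟫_ℝ = α) : ⟪x - y, r⟫_ℝ = 0 := by
    rw [real_inner_comm, inner_sub_right, hrx, hry, sub_self]
  obtain ⟨t, rfl⟩ := Submodule.mem_span_singleton.1 <|
    Submodule.mem_span_singleton_of_inner_eq_zero_of_inner_eq_zero (sub_ne_zero.2 hxy) hp
      (hd q hqx hqy) (hd p hpx hpy)
  have ht : t = 1 := by
    rw [real_inner_smul_left, hpx] at hqx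
    simpa [hα] using hqx
  exact hpq (by rw [ht, one_smul])

theorem exists_injective_mem_dotLine [Fact (finrank ℝ V = 2)] {α : ℝ} (hα : α ≠ 0)
    {ι : Type*} [Finite ι] {p : ι → V} (hp : Function.Injective p) (hp0 : ∀ i, p i ≠ 0)
    {S : Set V} (hS : S.Finite) :
    ∃ e : ι → ℕ → V, (∀ i m, e i m ∈ dotLine (p i) α) ∧
      Function.Injective (Function.uncurry e) ∧ ∀ i m, e i m ∉ S := by
  have : FiniteDimensional ℝ V := .of_fact_finrank_eq_succ 1
  let good i := dotLine (p i) α \ (S ∪ ⋃ (u) (_ : u ≠ i), dotLine (p u) α ∩ dotLine (p i) α)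
  have hgood i : (good i).Infinite := by
    refine (dotLine_infinite (Fact.out : finrank ℝ V = 2).ge (hp0 i) α).sdiff
      (hS.union (Set.finite_iUnion fun u => Set.finite_iUnion fun hu => ?_))
    exact (dotLine_inter_subsingleton hα (hp.ne hu)).finite
  refine ⟨fun i m => (hgood i).natEmbedding _ m, fun i m => ((hgood i).natEmbedding _ m).2.1,
    ?_, fun i m hm => ((hgood i).natEmbedding _ m).2.2 (Or.inl hm)⟩
  rintro ⟨i, m⟩ ⟨u, n⟩ h
  obtain rfl : i = u := by
    by_contra hiu
    have hi := ((hgood i).natEmbedding _ m).2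
    have hu := ((hgood u).natEmbedding _ n).2
    simp only [Function.uncurry_apply_pair] at h
    rw [h] at hi
    exact hi.2 (Or.inr (Set.mem_iUnion₂.2 ⟨u, Ne.symm hiu, hu.1, hi.1⟩))
  simpa using ((hgood i).natEmbedding _).injective (Subtype.ext h)

end Geometry

instance : Fact (finrank ℝ Pt2 = 2) := ⟨finrank_euclideanSpace_fin⟩

instance (c h : ℕ) : Finite (TreeVert c h) :=
  (List.finite_length_le (Fin c) h).to_subtype

theorem dpTreeConfigs_finite (c h : ℕ) (α : ℝ) (E : Finset Pt2) :
    (dpTreeConfigs c h α E).Finite :=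
  (Set.Finite.pi' fun _ => E.finite_toSet).subset fun _ hφ v => hφ.1 v

theorem dpTreeConfigs_mono {c h : ℕ} {α : ℝ} {E F : Finset Pt2} (hEF : E ⊆ F) :
    dpTreeConfigs c h α E ⊆ dpTreeConfigs c h α F :=
  fun _ ⟨hmem, hinj, hadj⟩ => ⟨fun v => hEF (hmem v), hinj, hadj⟩

/-- Two distinct children pin their parent down to the intersection of two distinct dot lines. -/
theorem eq_of_forall_leaf_eq {c h : ℕ} (hc : 2 ≤ c) {α : ℝ} (hα : α ≠ 0) {E : Finset Pt2}
    {φ ψ : TreeVert c h → Pt2} (hφ : φ ∈ dpTreeConfigs c h α E) (hψ : ψ ∈ dpTreeConfigs c h α E)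
    (hleaf : ∀ v : TreeVert c h, v.1.length = h → φ v = ψ v) : φ = ψ := by
  suffices ∀ k (v : TreeVert c h), v.1.length + k = h → φ v = ψ v from
    funext fun v => this _ v (Nat.add_sub_cancel' v.2)
  intro k
  induction k with
  | zero => exact hleaf
  | succ k ih =>
    intro v hv
    let child (i : Fin c) : TreeVert c h := ⟨i :: v.1, by simp; omega⟩
    have hchild (i : Fin c) : φ (child i) = ψ (child i) := ih (child i) (by simp [child]; omega)
    have hadj (i : Fin c) : treeAdj c h (child i) v := Or.inl ⟨i, rfl⟩
    have h01 : φ (child ⟨0, by omega⟩) ≠ φ (child ⟨1, by omega⟩) :=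
      hφ.2.1.ne fun h => by simpa [child] using congrArg Subtype.val h
    exact dotLine_inter_subsingleton hα h01
      ⟨hφ.2.2 _ _ (hadj _), hφ.2.2 _ _ (hadj _)⟩
      ⟨hchild _ ▸ hψ.2.2 _ _ (hadj _), hchild _ ▸ hψ.2.2 _ _ (hadj _)⟩

theorem ncard_dpTreeConfigs_le {c h : ℕ} (hc : 2 ≤ c) {α : ℝ} (hα : α ≠ 0) (E : Finset Pt2) :
    (dpTreeConfigs c h α E).ncard ≤ E.card ^ c ^ h := by
  classical
  let leaves (φ : TreeVert c h → Pt2) (l : List.Vector (Fin c) h) : Pt2 := φ ⟨l.1, l.2.le⟩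
  let leafMaps : Finset (List.Vector (Fin c) h → Pt2) := Fintype.piFinset fun _ => E
  calc (dpTreeConfigs c h α E).ncard
      ≤ (leafMaps : Set (List.Vector (Fin c) h → Pt2)).ncard := by
        refine Set.ncard_le_ncard_of_injOn leaves (fun φ hφ => ?_) (fun φ hφ ψ hψ h => ?_)
        · simpa [leaves, leafMaps] using fun l => hφ.1 _
        · exact eq_of_forall_leaf_eq hc hα hφ hψ fun v hv => congrFun h ⟨v.1, hv⟩
    _ = E.card ^ c ^ h := by rw [Set.ncard_coe_finset, Fintype.card_piFinset]; simp [card_vector]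

theorem List.length_le_succ_cases {β : Type*} {j : ℕ} {l : List β} (hl : l.length ≤ j + 1) :
    l.length ≤ j ∨ ∃ (t : List.Vector β j) (a : β), l = a :: t.1 := by
  refine (Nat.le_succ_iff.1 hl).imp_right fun hl => ?_
  obtain ⟨a, t, rfl⟩ := List.exists_cons_of_length_eq_add_one hl
  exact ⟨⟨t, by simpa using hl⟩, a, rfl⟩

section DotTreeMap

variable {c : ℕ}

/-- A dot product realization of `T_{c,j,α}`, given on all lists but constrained only on those
of length at most `j`; no host point set is fixed. -/
structure IsDotTreeMap (α : ℝ) (j : ℕ) (q : List (Fin c) → Pt2) : Prop where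
  injOn : Set.InjOn q {l | l.length ≤ j}
  ne_zero : ∀ l : List (Fin c), l.length ≤ j → q l ≠ 0
  inner_cons : ∀ (i : Fin c) (l : List (Fin c)), l.length < j → ⟪q l, q (i :: l)⟫_ℝ = α

theorem IsDotTreeMap.mem_dpTreeConfigs {α : ℝ} {h : ℕ} {q : List (Fin c) → Pt2}
    (hq : IsDotTreeMap α h q) {E : Finset Pt2} (hE : ∀ l : List (Fin c), l.length ≤ h → q l ∈ E) :
    (fun v : TreeVert c h => q v.1) ∈ dpTreeConfigs c h α E := by
  refine ⟨fun v => hE v.1 v.2, fun u v huv => Subtype.ext (hq.injOn u.2 v.2 huv), ?_⟩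
  rintro ⟨u, hu⟩ ⟨v, hv⟩ (⟨i, rfl⟩ | ⟨i, rfl⟩)
  · rw [real_inner_comm]
    exact hq.inner_cons i v (by simpa using hu)
  · exact hq.inner_cons i u (by simpa using hv)

def graft {j : ℕ} (q : List (Fin c) → Pt2) (F : List.Vector (Fin c) j → Fin c → Pt2) :
    List (Fin c) → Pt2
  | [] => q []
  | a :: t => if ht : t.length = j then F ⟨t, ht⟩ a else q (a :: t)

variable {j : ℕ} {α : ℝ} {q : List (Fin c) → Pt2} {F : List.Vector (Fin c) j → Fin c → Pt2}

theorem graft_of_length_le {l : List (Fin c)} (hl : l.length ≤ j) : graft q F l = q l := by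
  cases l with
  | nil => rfl
  | cons a t => exact dif_neg (by simp at hl; omega)

@[simp]
theorem graft_cons (t : List.Vector (Fin c) j) (a : Fin c) : graft q F (a :: t.1) = F t a :=
  dif_pos t.2

theorem IsDotTreeMap.graft (hα : α ≠ 0) (hq : IsDotTreeMap α j q)
    (hline : ∀ t a, F t a ∈ dotLine (q t.1) α) (hF : Function.Injective (Function.uncurry F))
    (hnew : ∀ t a, F t a ∉ q '' {l | l.length ≤ j}) : IsDotTreeMap α (j + 1) (graft q F) where
  injOn := by
    intro l₁ h₁ l₂ h₂ heq
    rcases List.length_le_succ_cases h₁ with h₁ | ⟨t₁, a₁, rfl⟩ <;>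
      rcases List.length_le_succ_cases h₂ with h₂ | ⟨t₂, a₂, rfl⟩ <;>
      simp only [graft_of_length_le h₁, graft_of_length_le h₂, graft_cons] at heq
    · exact hq.injOn h₁ h₂ heq
    · exact absurd ⟨l₁, h₁, heq⟩ (hnew t₂ a₂)
    · exact absurd ⟨l₂, h₂, heq.symm⟩ (hnew t₁ a₁)
    · obtain ⟨rfl, rfl⟩ := Prod.ext_iff.1 (@hF (t₁, a₁) (t₂, a₂) heq)
      rfl
  ne_zero l hl := by
    rcases List.length_le_succ_cases hl with hl | ⟨t, a, rfl⟩
    · rw [graft_of_length_le hl]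
      exact hq.ne_zero l hl
    · rw [graft_cons]
      exact ne_zero_of_mem_dotLine hα (hline t a)
  inner_cons i l hl := by
    rw [graft_of_length_le (Nat.le_of_lt_succ hl)]
    rcases (Nat.le_of_lt_succ hl).lt_or_eq with hl | hl
    · rw [graft_of_length_le (by simpa using hl)]
      exact hq.inner_cons i l hl
    · exact graft_cons (q := q) (F := F) ⟨l, hl⟩ i ▸ hline ⟨l, hl⟩ i

theorem IsDotTreeMap.exists_children (hα : α ≠ 0) (hq : IsDotTreeMap α j q) :
    ∃ e : List.Vector (Fin c) j → ℕ → Pt2, (∀ t m, e t m ∈ dotLine (q t.1) α) ∧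
      Function.Injective (Function.uncurry e) ∧ ∀ t m, e t m ∉ q '' {l | l.length ≤ j} :=
  exists_injective_mem_dotLine hα (p := fun t : List.Vector (Fin c) j => q t.1)
    (fun t u htu => Subtype.ext (hq.injOn t.2.le u.2.le htu)) (fun t => hq.ne_zero t.1 t.2.le)
    ((List.finite_length_le (Fin c) j).image q)

theorem IsDotTreeMap.graft_children (hα : α ≠ 0) (hq : IsDotTreeMap α j q)
    {e : List.Vector (Fin c) j → ℕ → Pt2} (hline : ∀ t m, e t m ∈ dotLine (q t.1) α)
    (he : Function.Injective (Function.uncurry e)) (hnew : ∀ t m, e t m ∉ q '' {l | l.length ≤ j})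
    (G : List.Vector (Fin c) j → Fin c ↪ ℕ) :
    IsDotTreeMap α (j + 1) (_root_.graft q fun t a => e t (G t a)) :=
  hq.graft hα (fun t a => hline t _) (fun ⟨t, a⟩ ⟨u, b⟩ h => by
    obtain ⟨rfl, hG⟩ := Prod.ext_iff.1 (@he (t, G t a) (u, G u b) h)
    exact Prod.ext rfl ((G t).injective hG)) fun t a => hnew t _

end DotTreeMap

theorem exists_isDotTreeMap {c : ℕ} {α : ℝ} (hα : α ≠ 0) (j : ℕ) :
    ∃ q : List (Fin c) → Pt2, IsDotTreeMap α j q := by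
  induction j with
  | zero =>
    obtain ⟨p, hp⟩ := exists_ne (0 : Pt2)
    refine ⟨fun _ => p, fun l₁ h₁ l₂ h₂ _ => ?_, fun _ _ => hp, fun _ _ h => absurd h (by simp)⟩
    simp_all
  | succ j ih =>
    obtain ⟨q, hq⟩ := ih
    obtain ⟨e, hline, he, hnew⟩ := hq.exists_children hα
    exact ⟨_, hq.graft_children hα hline he hnew fun _ => Fin.valEmbedding⟩

/-- The `c ^ j` parents of leaves are placed once and for all; below each of them the `c` leaves
may go to any `c` of `M` points reserved on the parent's dot line. -/
theorem exists_le_ncard_dpTreeConfigs {α : ℝ} (hα : α ≠ 0) (c j : ℕ) :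
    ∃ I : ℕ, ∀ M : ℕ, ∃ E : Finset Pt2, E.card ≤ I + c ^ j * M ∧
      M.descFactorial c ^ c ^ j ≤ (dpTreeConfigs c (j + 1) α E).ncard := by
  classical
  obtain ⟨q, hq⟩ := exists_isDotTreeMap (c := c) hα j
  obtain ⟨e, hline, he, hnew⟩ := hq.exists_children hα
  have hS := (List.finite_length_le (Fin c) j).image q
  refine ⟨hS.toFinset.card, fun M => ?_⟩
  let Choice := List.Vector (Fin c) j → Fin c ↪ Fin M
  let E := hS.toFinset ∪ Finset.univ.image fun p : List.Vector (Fin c) j × Fin M => e p.1 p.2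
  let config (g : Choice) (v : TreeVert c (j + 1)) : Pt2 := graft q (fun t a => e t (g t a)) v.1
  have hconfig (g : Choice) : config g ∈ dpTreeConfigs c (j + 1) α E := by
    refine (hq.graft_children hα hline he hnew fun t => (g t).trans Fin.valEmbedding)
      |>.mem_dpTreeConfigs fun l hl => ?_
    rcases List.length_le_succ_cases hl with hl | ⟨t, a, rfl⟩
    · rw [graft_of_length_le hl]
      exact Finset.mem_union_left _ (hS.mem_toFinset.2 ⟨l, hl, rfl⟩)
    · simp [E]
  have hinj : Function.Injective config := by
    intro g g' hgg'
    funext t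
    ext a
    have := congrFun hgg' ⟨a :: t.1, by simp⟩
    simp only [config, graft_cons] at this
    simpa using (Prod.ext_iff.1 (@he (t, g t a) (t, g' t a) this)).2
  refine ⟨E, ?_, ?_⟩
  · refine (Finset.card_union_le _ _).trans (Nat.add_le_add_left (Finset.card_image_le.trans ?_) _)
    simp [card_vector]
  calc M.descFactorial c ^ c ^ j = (Set.univ : Set Choice).ncard := by
        simp [Choice, Set.ncard_univ, card_vector, Fintype.card_embedding_eq]
    _ ≤ (dpTreeConfigs c (j + 1) α E).ncard :=
        Set.ncard_le_ncard_of_injOn config (fun g _ => hconfig g) hinj.injOn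
          (dpTreeConfigs_finite _ _ _ _)

theorem exists_pos_mul_pow_le_ncard_dpTreeConfigs {c : ℕ} (hc : 0 < c) {α : ℝ} (hα : α ≠ 0)
    (j : ℕ) : ∃ c' : ℝ, 0 < c' ∧ ∃ N : ℕ, ∀ n : ℕ, N < n →
      ∃ E : Finset Pt2, E.card = n ∧
        c' * (n : ℝ) ^ (c ^ (j + 1)) ≤ ((dpTreeConfigs c (j + 1) α E).ncard : ℝ) := by
  obtain ⟨I, hI⟩ := exists_le_ncard_dpTreeConfigs hα c j
  set k := c ^ j
  have hk : 0 < k := pow_pos hc j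
  refine ⟨1 / (2 * k : ℝ) ^ c ^ (j + 1), by positivity, 2 * (I + k * c), fun n hn => ?_⟩
  set M := (n - I) / k
  obtain ⟨E₀, hE₀, hcount⟩ := hI M
  have hkM : k * M ≤ n - I := Nat.mul_div_le _ _
  have hkM' : n - I < k * (M + 1) := Nat.lt_mul_div_succ _ hk
  obtain ⟨E, hE₀E, hEn⟩ := Infinite.exists_superset_card_eq E₀ n (by omega)
  refine ⟨E, hEn, ?_⟩
  have hn : n ≤ 2 * k * (M + 1 - c) := by
    rw [mul_assoc, Nat.mul_sub]
    omega
  have key : n ^ c ^ (j + 1) ≤ (2 * k) ^ c ^ (j + 1) * (dpTreeConfigs c (j + 1) α E).ncard :=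
    calc n ^ c ^ (j + 1)
        ≤ (2 * k) ^ c ^ (j + 1) * ((M + 1 - c) ^ c) ^ k := by
          rw [← pow_mul, ← pow_succ', ← mul_pow]
          exact Nat.pow_le_pow_left hn _
      _ ≤ (2 * k) ^ c ^ (j + 1) * (dpTreeConfigs c (j + 1) α E₀).ncard := by
          gcongr
          exact (Nat.pow_le_pow_left (Nat.pow_sub_le_descFactorial M c) k).trans hcount
      _ ≤ (2 * k) ^ c ^ (j + 1) * (dpTreeConfigs c (j + 1) α E).ncard :=
          Nat.mul_le_mul_left _
            (Set.ncard_le_ncard (dpTreeConfigs_mono hE₀E) (dpTreeConfigs_finite _ _ _ _))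
  rw [one_div, inv_mul_le_iff₀ (by positivity)]
  exact_mod_cast key

/-- **dot product configurations on perfect `c`-ary trees with constant
weight, in the plane.**  Fix `c ≥ 2`, `h ≥ 1`, and `α ≠ 0`.  Then
`g(T_{c,h,α}; n) ≈ n^(c^h)`: there is `C > 0` such that every set of `n` points in the
plane has at most `C · n^(c^h)` dot product `T_{c,h,α}`-configurations, and there are
`c' > 0` and `N` such that for every `n > N` some set of `n` points in the plane has at
least `c' · n^(c^h)` of them. -/
theorem dotProduct_tree_bounds (c h : ℕ) (hc : 2 ≤ c) (hh : 1 ≤ h) (α : ℝ) (hα : α ≠ 0) :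
    (∃ C : ℝ, 0 < C ∧ ∀ (n : ℕ) (E : Finset Pt2), E.card = n →
      ((dpTreeConfigs c h α E).ncard : ℝ) ≤ C * (n : ℝ) ^ (c ^ h)) ∧
    (∃ c' : ℝ, 0 < c' ∧ ∃ N : ℕ, ∀ n : ℕ, N < n →
      ∃ E : Finset Pt2, E.card = n ∧
        c' * (n : ℝ) ^ (c ^ h) ≤ ((dpTreeConfigs c h α E).ncard : ℝ)) := by
  refine ⟨⟨1, one_pos, fun n E hE => ?_⟩, ?_⟩
  · rw [one_mul, ← hE]
    exact_mod_cast ncard_dpTreeConfigs_le hc hα E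
  · obtain ⟨j, rfl⟩ := Nat.exists_eq_add_of_le' hh
    exact exists_pos_mul_pow_le_ncard_dpTreeConfigs (by omega) hα j
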